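/- arXiv:1607.05412 — 12 statements merged into one kernel-verified Lean document; each statement's English description precedes it below -/
import Mathlib

section
/- Every strictly grounded fixpoint of a lattice operator is grounded. -/
/-- `x` is grounded for operator `O`: for all `v`, `O(x ⊓ v) ≤ v` implies `x ≤ v`. -/
def grounded {L : Type*} [CompleteLattice L] (O : L → L) (x : L) : Prop :=
  ∀ v : L, O (x ⊓ v) ≤ v → x ≤ v

/-- `x` is strictly grounded for `O`: there is no `y < x` with `O(y) ⊓ x ≤ y`. -/
def strictlyGrounded {L : Type*} [CompleteLattice L] (O : L → L) (x : L) : Prop :=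
  ¬ ∃ y : L, y < x ∧ O y ⊓ x ≤ y

/-- Every strictly grounded fixpoint of a lattice operator is grounded. -/
theorem strictlyGrounded_fixpoint_grounded {L : Type*} [CompleteLattice L]
    (O : L → L) (x : L) (hfix : O x = x) (hsg : strictlyGrounded O x) :
    grounded O x := by
  intro v hv
  by_contra h
  apply hsg
  refine ⟨x ⊓ v, ?_, ?_⟩
  · exact lt_of_le_of_ne inf_le_left (fun he => h (he ▸ inf_le_right))
  · exact le_inf inf_le_right (le_trans inf_le_left hv)
end

section
/- In a powerset lattice, every grounded element of an operator is strictly grounded. -/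
/-- In a powerset lattice, every grounded element of an operator is strictly grounded. -/
theorem grounded_strictlyGrounded_powerset {S : Type*} (O : Set S → Set S) (x : Set S)
    (hg : ∀ v : Set S, O (x ∩ v) ⊆ v → x ⊆ v) :
    ¬ ∃ y : Set S, y ⊂ x ∧ O y ∩ x ⊆ y := by
  rintro ⟨y, hy, hOy⟩
  have hxy : x ∩ (y ∪ xᶜ) = y := by
    ext s; constructor
    · rintro ⟨hs, hs' | hs'⟩
      · exact hs'
      · exact absurd hs hs'
    · intro hs; exact ⟨hy.1 hs, Or.inl hs⟩
  have h := hg (y ∪ xᶜ) (by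
    rw [hxy]
    intro s hs
    by_cases hx : s ∈ x
    · exact Or.inl (hOy ⟨hs, hx⟩)
    · exact Or.inr hx)
  have : x ⊆ y := fun s hs => (h hs).elim id (fun hc => absurd hs hc)
  exact hy.2 this
end

section
/- Every grounded fixpoint of a lattice operator is a minimal fixpoint. -/
/-- Every grounded fixpoint of a lattice operator is a minimal fixpoint. -/
theorem grounded_fixpoint_minimal {L : Type*} [CompleteLattice L]
    (O : L → L) (x : L) (hfix : O x = x) (hg : grounded O x) :
    ¬ ∃ y : L, O y = y ∧ y < x := by
  rintro ⟨y, hy, hlt⟩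
  have : x ⊓ y = y := inf_eq_right.mpr hlt.le
  have := hg y (by rw [this, hy])
  exact hlt.not_ge this
end

section
/- For consistent sets of update actions U and V over a set of atoms At, the set U ⊎ V := (U ∪ {α ∈ V | αᴰ ∉ U}) \ {α ∈ U | αᴰ ∈ V} is consistent, and if every action in U changes the database DB and every action in V changes U(DB), then (U ⊎ V)(DB) = V(U(DB)). -/
set_option maxHeartbeats 2000000


/-- Update actions: add or remove an atom. -/
inductive Act (A : Type) : Type
  | add : A → Act A
  | rem : A → Act A

/-- The dual of an update action. -/
def Act.dual {A : Type} : Act A → Act A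
  | .add a => .rem a
  | .rem a => .add a

/-- Literals: an atom or its negation. -/
inductive Lit (A : Type) : Type
  | pos : A → Lit A
  | neg : A → Lit A

/-- The "dual" (negation) of a literal. -/
def Lit.negate {A : Type} : Lit A → Lit A
  | .pos a => .neg a
  | .neg a => .pos a

/-- The literal associated to an update action. -/
def litOf {A : Type} : Act A → Lit A
  | .add a => .pos a
  | .rem a => .neg a

/-- The update action associated to a literal. -/
def uaOf {A : Type} : Lit A → Act A
  | .pos a => .add a
  | .neg a => .rem a

/-- Satisfaction of a literal by a database. -/
def satLit {A : Type} (DB : Set A) : Lit A → Prop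
  | .pos a => a ∈ DB
  | .neg a => a ∉ DB

/-- The result `U(DB)` of applying a set of update actions to a database. -/
def applyUA {A : Type} (U : Set (Act A)) (DB : Set A) : Set A :=
  (DB ∪ {a | Act.add a ∈ U}) \ {a | Act.rem a ∈ U}

/-- A set of update actions is consistent if it has no action together with its dual. -/
def consistentUA {A : Type} (U : Set (Act A)) : Prop :=
  ∀ α ∈ U, α.dual ∉ U

/-- An action changes the database. -/
def changes {A : Type} (DB : Set A) : Act A → Prop
  | .add a => a ∉ DB
  | .rem a => a ∈ DB

/-- The operation `U ⊎ V = (U ∪ {α ∈ V | αᴰ ∉ U}) \ {α ∈ U | αᴰ ∈ V}`. -/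
def uplus {A : Type} (U V : Set (Act A)) : Set (Act A) :=
  (U ∪ {α | α ∈ V ∧ α.dual ∉ U}) \ {α | α ∈ U ∧ α.dual ∈ V}

/-- A normalized active integrity constraint. -/
structure NAIC (A : Type) where
  body : Set (Lit A)
  head : Act A
  hcond : litOf head.dual ∈ body

/-- Satisfaction of a body (set of literals) by a database. -/
def satBody {A : Type} (DB : Set A) (B : Set (Lit A)) : Prop :=
  ∀ ℓ ∈ B, satLit DB ℓ

/-- The operator `T(U) = U ⊎ {head(r) | U(DB) ⊨ body(r), r ∈ η}`. -/
def T {A : Type} (DB : Set A) (η : Set (NAIC A)) (U : Set (Act A)) : Set (Act A) :=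
  uplus U {α | ∃ r ∈ η, r.head = α ∧ satBody (applyUA U DB) r.body}

/-- `U` is a weak repair for `(DB, η)`. -/
def weakRepair {A : Type} (DB : Set A) (η : Set (NAIC A)) (U : Set (Act A)) : Prop :=
  (∀ α ∈ U, changes DB α) ∧ ∀ r ∈ η, ¬ satBody (applyUA U DB) r.body

/-- `U` is a repair for `(DB, η)`: a weak repair minimal wrt inclusion. -/
def repair {A : Type} (DB : Set A) (η : Set (NAIC A)) (U : Set (Act A)) : Prop :=
  weakRepair DB η U ∧ ∀ V ⊆ U, weakRepair DB η V → V = U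

/-- `U` is founded wrt `(DB, η)`. -/
def founded {A : Type} (DB : Set A) (η : Set (NAIC A)) (U : Set (Act A)) : Prop :=
  ∀ α ∈ U, ∃ r ∈ η, r.head = α ∧ satBody (applyUA (U \ {α}) DB) r.body

/-- `U` is a (strictly) grounded fixpoint-candidate of `T`: no `V ⊊ U` with `T(V) ∩ U ⊆ V`. -/
def strictlyGroundedT {A : Type} (DB : Set A) (η : Set (NAIC A)) (U : Set (Act A)) : Prop :=
  ¬ ∃ V : Set (Act A), V ⊂ U ∧ T DB η V ∩ U ⊆ V

/-- A grounded repair: a repair that is a (strictly) grounded fixpoint of `T`. -/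
def groundedRepair {A : Type} (DB : Set A) (η : Set (NAIC A)) (U : Set (Act A)) : Prop :=
  repair DB η U ∧ strictlyGroundedT DB η U

/-- A well-founded weak repair: a weak repair whose elements can be ordered
`α₁, …, αₙ` so that each `αᵢ` is the head of a rule applicable in `{α₁,…,α_{i-1}}(DB)`. -/
def wellFoundedWeakRepair {A : Type} (DB : Set A) (η : Set (NAIC A)) (U : Set (Act A)) : Prop :=
  weakRepair DB η U ∧ ∃ l : List (Act A), l.Nodup ∧ (∀ α, α ∈ U ↔ α ∈ l) ∧
    ∀ i : Fin l.length, ∃ r ∈ η, r.head = l.get i ∧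
      satBody (applyUA {β | β ∈ l.take i.val} DB) r.body

/-- `U ⊎ V` is consistent, and if every action in `U` changes `DB` and every action in
`V` changes `U(DB)`, then `(U ⊎ V)(DB) = V(U(DB))`. -/
theorem uplus_consistent_and_comp {A : Type} (DB : Set A) (U V : Set (Act A))
    (hU : consistentUA U) (hV : consistentUA V) :
    consistentUA (uplus U V) ∧
      ((∀ α ∈ U, changes DB α) → (∀ α ∈ V, changes (applyUA U DB) α) →
        applyUA (uplus U V) DB = applyUA V (applyUA U DB)) := by
  constructor
  · intro α hα hdual
    have hdd : α.dual.dual = α := by cases α <;> rfl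
    have h1 := hU α
    have h2 := hV α
    have h3 := hU α.dual
    have h4 := hV α.dual
    simp only [uplus, Set.mem_diff, Set.mem_union, Set.mem_setOf_eq, hdd] at hα hdual
    tauto
  · intro hU1 hV1
    ext a
    have hUa : Act.add a ∈ U → a ∉ DB := fun h => hU1 _ h
    have hUr : Act.rem a ∈ U → a ∈ DB := fun h => hU1 _ h
    have hVa : Act.add a ∈ V → a ∉ applyUA U DB := fun h => hV1 _ h
    have hVr : Act.rem a ∈ V → a ∈ applyUA U DB := fun h => hV1 _ h
    have hU1' : Act.add a ∈ U → Act.rem a ∉ U := hU (Act.add a)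
    have hV1' : Act.add a ∈ V → Act.rem a ∉ V := hV (Act.add a)
    clear hU hV hU1 hV1
    simp only [applyUA, uplus, changes, Act.dual, Set.mem_diff, Set.mem_union,
      Set.mem_setOf_eq] at *
    tauto
end

section
/- A set of update actions U (each of whose actions changes DB) is a weak repair for (DB, η) if and only if U is a fixpoint of the operator T, where T(U) = U ⊎ {head(r) | U(DB) ⊨ body(r), r ∈ η}. -/
/-- `U` (whose actions all change `DB`) is a weak repair for `(DB, η)` iff it is a
fixpoint of `T`. -/
theorem weakRepair_iff_fixpoint {A : Type} (DB : Set A) (η : Set (NAIC A))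
    (U : Set (Act A)) (hchg : ∀ α ∈ U, changes DB α) :
    weakRepair DB η U ↔ T DB η U = U := by
  constructor
  · rintro ⟨-, hno⟩
    ext α
    simp only [T, uplus, Set.mem_diff, Set.mem_union, Set.mem_setOf_eq]
    constructor
    · rintro ⟨h1 | ⟨⟨r, hr, hh, hs⟩, -⟩, -⟩
      · exact h1
      · exact absurd hs (hno r hr)
    · intro h
      refine ⟨Or.inl h, ?_⟩
      rintro ⟨-, r, hr, hh, hs⟩
      exact hno r hr hs
  · intro hfix
    refine ⟨hchg, ?_⟩
    intro r hr hsat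
    have hfix' := Set.ext_iff.mp hfix
    simp only [T, uplus, Set.mem_diff, Set.mem_union, Set.mem_setOf_eq] at hfix'
    have hlit := hsat _ r.hcond
    have hmem : ∀ a, a ∈ applyUA U DB ↔ (a ∈ DB ∨ Act.add a ∈ U) ∧ Act.rem a ∉ U := by
      intro a
      simp [applyUA]
    cases hα : r.head with
    | add a =>
      have hlit' : a ∉ applyUA U DB := by
        rw [hα] at hlit; exact hlit
      have hS : ∃ r' ∈ η, r'.head = Act.add a ∧ satBody (applyUA U DB) r'.body :=
        ⟨r, hr, hα, hsat⟩
      have hnadd : Act.add a ∉ U := by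
        intro hadd
        have hndb : a ∉ DB := hchg _ hadd
        have hnrem : Act.rem a ∉ U := fun hrem => hndb (hchg _ hrem)
        exact hlit' ((hmem a).mpr ⟨Or.inr hadd, hnrem⟩)
      have hrem : Act.rem a ∈ U := by
        by_contra hnrem
        exact hnadd ((hfix' (Act.add a)).mp ⟨Or.inr ⟨hS, by simpa [Act.dual] using hnrem⟩,
          fun h => hnadd h.1⟩)
      have := (hfix' (Act.rem a)).mpr hrem
      exact this.2 ⟨hrem, by simpa [Act.dual] using hS⟩
    | rem a =>
      have hlit' : a ∈ applyUA U DB := by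
        rw [hα] at hlit; exact hlit
      have hS : ∃ r' ∈ η, r'.head = Act.rem a ∧ satBody (applyUA U DB) r'.body :=
        ⟨r, hr, hα, hsat⟩
      have hnrem : Act.rem a ∉ U := ((hmem a).mp hlit').2
      have hadd : Act.add a ∈ U := by
        by_contra hnadd
        exact hnrem ((hfix' (Act.rem a)).mp ⟨Or.inr ⟨hS, by simpa [Act.dual] using hnadd⟩,
          fun h => hnrem h.1⟩)
      have := (hfix' (Act.add a)).mpr hadd
      exact this.2 ⟨hadd, by simpa [Act.dual] using hS⟩
end

section
/- A set of update actions U is a repair for (DB, η) if and only if U is a minimal fixpoint of the operator T. -/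

lemma Act.dual_dual {A : Type} (α : Act A) : α.dual.dual = α := by
  cases α <;> rfl

lemma head_not_mem {A : Type} {DB : Set A} {U : Set (Act A)}
    (hU : ∀ α ∈ U, changes DB α) (r : NAIC A)
    (hsat : satBody (applyUA U DB) r.body) : r.head ∉ U := by
  intro hmem
  have h := hsat _ r.hcond
  cases hh : r.head with
  | add a =>
    rw [hh] at hmem h
    simp only [Act.dual, litOf, satLit, applyUA, Set.mem_diff, Set.mem_union,
      Set.mem_setOf_eq] at h
    have hrem : Act.rem a ∉ U := by
      intro hr
      exact (hU _ hmem) (hU _ hr)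
    exact h ⟨Or.inr hmem, hrem⟩
  | rem a =>
    rw [hh] at hmem h
    simp only [Act.dual, litOf, satLit, applyUA, Set.mem_diff, Set.mem_union,
      Set.mem_setOf_eq] at h
    exact h.2 hmem

lemma fix_iff {A : Type} (DB : Set A) (η : Set (NAIC A)) (U : Set (Act A))
    (hU : ∀ α ∈ U, changes DB α) :
    T DB η U = U ↔ ∀ r ∈ η, ¬ satBody (applyUA U DB) r.body := by
  constructor
  · intro hfix r hr hsat
    have hnm : r.head ∉ U := head_not_mem hU r hsat
    by_cases hd : r.head.dual ∈ U
    · have hnt : r.head.dual ∉ T DB η U := by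
        intro hmem
        simp only [T, uplus, Set.mem_diff, Set.mem_union, Set.mem_setOf_eq] at hmem
        exact hmem.2 ⟨hd, ⟨r, hr, (Act.dual_dual r.head).symm, hsat⟩⟩
      rw [hfix] at hnt; exact hnt hd
    · have hmt : r.head ∈ T DB η U := by
        simp only [T, uplus, Set.mem_diff, Set.mem_union, Set.mem_setOf_eq]
        exact ⟨Or.inr ⟨⟨r, hr, rfl, hsat⟩, hd⟩, fun hmem => hnm hmem.1⟩
      rw [hfix] at hmt; exact hnm hmt
  · intro hns
    ext α
    simp only [T, uplus, Set.mem_diff, Set.mem_union, Set.mem_setOf_eq]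
    constructor
    · rintro ⟨h1 | ⟨⟨r, hr, _, hsat⟩, _⟩, _⟩
      · exact h1
      · exact absurd hsat (hns r hr)
    · intro hα
      refine ⟨Or.inl hα, ?_⟩
      rintro ⟨_, r, hr, _, hsat⟩
      exact hns r hr hsat

/-- `U` is a repair for `(DB, η)` iff it is a minimal fixpoint of `T` (on the lattice of
sets of update actions all of whose elements change `DB`). -/
theorem repair_iff_minimal_fixpoint {A : Type} (DB : Set A) (η : Set (NAIC A))
    (U : Set (Act A)) :
    repair DB η U ↔
      ((∀ α ∈ U, changes DB α) ∧ T DB η U = U ∧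
        ∀ V : Set (Act A), (∀ α ∈ V, changes DB α) → T DB η V = V → V ⊆ U → V = U) := by
  constructor
  · rintro ⟨⟨hprop, hns⟩, hmin⟩
    refine ⟨hprop, (fix_iff DB η U hprop).mpr hns, ?_⟩
    intro V hVprop hVfix hVU
    exact hmin V hVU ⟨hVprop, (fix_iff DB η V hVprop).mp hVfix⟩
  · rintro ⟨hprop, hfix, hmin⟩
    refine ⟨⟨hprop, (fix_iff DB η U hprop).mp hfix⟩, ?_⟩
    rintro V hVU ⟨hVprop, hVns⟩
    exact hmin V hVprop ((fix_iff DB η V hVprop).mpr hVns) hVU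
end

section
/- Every grounded repair for (DB, η) is founded. -/
/-- Every grounded repair for `(DB, η)` is founded. -/
theorem groundedRepair_founded {A : Type} (DB : Set A) (η : Set (NAIC A))
    (U : Set (Act A)) (h : groundedRepair DB η U) :
    founded DB η U := by
  intro α hα
  by_contra hno
  push_neg at hno
  apply h.2
  refine ⟨U \ {α}, ?_, ?_⟩
  · exact ⟨Set.diff_subset, fun hsub => (hsub hα).2 rfl⟩
  · rintro x ⟨hxT, hxU⟩
    obtain ⟨hx1, -⟩ := hxT
    rcases hx1 with hV | ⟨⟨r, hr, hhead, hsat⟩, -⟩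
    · exact hV
    · by_cases hxa : x = α
      · subst hxa
        exact absurd hsat (hno r hr hhead)
      · exact ⟨hxU, hxa⟩
end

section
/- Every justified repair for (DB, η) with η normalized is a grounded repair. -/
/-- The no-effect actions wrt `DB` and `U`. -/
def neff {A : Type} (DB : Set A) (U : Set (Act A)) : Set (Act A) :=
  {α | ∃ a, α = Act.add a ∧ a ∈ DB ∧ a ∈ applyUA U DB} ∪
  {α | ∃ a, α = Act.rem a ∧ a ∉ DB ∧ a ∉ applyUA U DB}

/-- `W` is closed under `η`: for each rule, if the actions of its non-updatable literals
are in `W`, then its head is in `W`. -/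
def closedUnder {A : Type} (η : Set (NAIC A)) (W : Set (Act A)) : Prop :=
  ∀ r ∈ η, (uaOf '' (r.body \ {litOf r.head.dual})) ⊆ W → r.head ∈ W

/-- `U` is a justified repair: a repair such that `U ∪ neff(U)` is the least superset of
`neff(U)` closed under `η`. -/
def justifiedRepair {A : Type} (DB : Set A) (η : Set (NAIC A)) (U : Set (Act A)) : Prop :=
  repair DB η U ∧ closedUnder η (U ∪ neff DB U) ∧
    ∀ W : Set (Act A), neff DB U ⊆ W → closedUnder η W → U ∪ neff DB U ⊆ W

/-- Every justified repair for `(DB, η)` with `η` normalized is a grounded repair. -/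
theorem justifiedRepair_grounded {A : Type} (DB : Set A) (η : Set (NAIC A))
    (U : Set (Act A)) (h : justifiedRepair DB η U) :
    groundedRepair DB η U := by
  obtain ⟨hrep, hclosed, hmin⟩ := h
  have hchg : ∀ α ∈ U, changes DB α := hrep.1.1
  have haddU : ∀ a, Act.add a ∈ U → a ∉ DB := fun a ha => hchg _ ha
  have hremU : ∀ a, Act.rem a ∈ U → a ∈ DB := fun a ha => hchg _ ha
  refine ⟨hrep, ?_⟩
  rintro ⟨V, hVU, hTV⟩
  have hVsub : V ⊆ U := hVU.1
  -- closedness of V ∪ neff DB U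
  have hcl : closedUnder η (V ∪ neff DB U) := by
    intro r hr hb
    have hb' : uaOf '' (r.body \ {litOf r.head.dual}) ⊆ U ∪ neff DB U := by
      intro x hx
      rcases hb hx with h | h
      · exact Or.inl (hVsub h)
      · exact Or.inr h
    rcases hclosed r hr hb' with hU | hne
    · by_cases hV : r.head ∈ V
      · exact Or.inl hV
      · left
        apply hTV
        refine ⟨?_, hU⟩
        have hsat : satBody (applyUA V DB) r.body := by
          intro ℓ hℓ
          by_cases hℓd : ℓ = litOf r.head.dual
          · subst hℓd
            cases hhd : r.head with
            | add a =>
              rw [hhd] at hU hV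
              have haDB : a ∉ DB := haddU a hU
              simp only [Act.dual, litOf, satLit, applyUA, Set.mem_diff,
                Set.mem_union, Set.mem_setOf_eq]
              rintro ⟨h1 | h2, -⟩
              · exact haDB h1
              · exact hV h2
            | rem a =>
              rw [hhd] at hU hV
              have haDB : a ∈ DB := hremU a hU
              simp only [Act.dual, litOf, satLit, applyUA, Set.mem_diff,
                Set.mem_union, Set.mem_setOf_eq]
              exact ⟨Or.inl haDB, hV⟩
          · have hmem : uaOf ℓ ∈ V ∪ neff DB U := hb ⟨ℓ, ⟨hℓ, hℓd⟩, rfl⟩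
            cases ℓ with
            | pos a =>
              simp only [uaOf] at hmem
              simp only [satLit, applyUA, Set.mem_diff, Set.mem_union, Set.mem_setOf_eq]
              rcases hmem with hv | hn
              · refine ⟨Or.inr hv, fun hrem => ?_⟩
                exact haddU a (hVsub hv) (hremU a (hVsub hrem))
              · rcases hn with ⟨b, hb1, hb2, hb3⟩ | ⟨b, hb1, hb2, hb3⟩
                · obtain rfl : a = b := by injection hb1
                  refine ⟨Or.inl hb2, fun hrem => ?_⟩
                  have : Act.rem a ∈ U := hVsub hrem
                  simp only [applyUA, Set.mem_diff, Set.mem_setOf_eq] at hb3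
                  exact hb3.2 this
                · exact absurd hb1 (by simp)
            | neg a =>
              simp only [uaOf] at hmem
              simp only [satLit, applyUA, Set.mem_diff, Set.mem_union, Set.mem_setOf_eq]
              rcases hmem with hv | hn
              · rintro ⟨-, hrem⟩; exact hrem hv
              · rcases hn with ⟨b, hb1, hb2, hb3⟩ | ⟨b, hb1, hb2, hb3⟩
                · exact absurd hb1 (by simp)
                · obtain rfl : a = b := by injection hb1
                  rintro ⟨h1 | h2, -⟩
                  · exact hb2 h1
                  · -- Act.add a ∈ V ⊆ U, but a ∉ applyUA U DB
                    have haU : Act.add a ∈ U := hVsub h2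
                    have hremU2 : Act.rem a ∉ U := fun hh => hb2 (hremU a hh)
                    simp only [applyUA, Set.mem_diff, Set.mem_union,
                      Set.mem_setOf_eq] at hb3
                    exact hb3 ⟨Or.inr haU, hremU2⟩
        have hdual : r.head.dual ∉ V := by
          intro hd
          cases hhd : r.head with
          | add a =>
            rw [hhd] at hU hd
            exact haddU a hU (hremU a (hVsub hd))
          | rem a =>
            rw [hhd] at hU hd
            exact haddU a (hVsub hd) (hremU a hU)
        simp only [T, uplus, Set.mem_diff, Set.mem_union, Set.mem_setOf_eq]
        refine ⟨Or.inr ⟨⟨r, hr, rfl, hsat⟩, hdual⟩, fun hc => hV hc.1⟩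
    · exact Or.inr hne
  have hsub : U ∪ neff DB U ⊆ V ∪ neff DB U :=
    hmin _ Set.subset_union_right hcl
  obtain ⟨α, hαU, hαV⟩ := Set.exists_of_ssubset hVU
  rcases hsub (Or.inl hαU) with hv | hn
  · exact hαV hv
  · rcases hn with ⟨a, rfl, h2, -⟩ | ⟨a, rfl, h2, -⟩
    · exact haddU a hαU h2
    · exact h2 (hremU a hαU)
end

section
/- If η₁ ⊥ η₂ (independent), then U is a grounded repair for (DB, η₁ ∪ η₂) if and only if U = U₁ ∪ U₂ where Uᵢ = U ∩ {head(r) | r ∈ ηᵢ} and each Uᵢ is a grounded repair for (DB, ηᵢ). -/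
/-- `ℓ` shares no common or dual literal with the set `B`. -/
def noCommonOrDual {A : Type} (ℓ : Lit A) (B : Set (Lit A)) : Prop :=
  ℓ ∉ B ∧ ℓ.negate ∉ B

/-- `η₁ ⊥ η₂`: for all `r₁ ∈ η₁`, `r₂ ∈ η₂`, `lit(head(rᵢ))` and `body(r₍₃₋ᵢ₎)` contain
no common or dual literals. -/
def indepAIC {A : Type} (η₁ η₂ : Set (NAIC A)) : Prop :=
  ∀ r₁ ∈ η₁, ∀ r₂ ∈ η₂,
    noCommonOrDual (litOf r₁.head) r₂.body ∧ noCommonOrDual (litOf r₂.head) r₁.body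

/-! ### Auxiliary definitions and lemmas -/

def heads {A : Type} (η : Set (NAIC A)) : Set (Act A) := {α | ∃ r ∈ η, r.head = α}

def appSet {A : Type} (DB : Set A) (η : Set (NAIC A)) (W : Set (Act A)) : Set (Act A) :=
  {α | ∃ r ∈ η, r.head = α ∧ satBody (applyUA W DB) r.body}

lemma T_eq {A : Type} (DB : Set A) (η : Set (NAIC A)) (W : Set (Act A)) :
    T DB η W = uplus W (appSet DB η W) := rfl

lemma mem_uplus {A : Type} {U V : Set (Act A)} {α : Act A} :
    α ∈ uplus U V ↔ (α ∈ U ∨ (α ∈ V ∧ α.dual ∉ U)) ∧ ¬(α ∈ U ∧ α.dual ∈ V) := Iff.rfl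

lemma heads_union {A : Type} (η₁ η₂ : Set (NAIC A)) :
    heads (η₁ ∪ η₂) = heads η₁ ∪ heads η₂ := by
  ext α
  constructor
  · rintro ⟨r, h | h, rfl⟩
    · exact Or.inl ⟨r, h, rfl⟩
    · exact Or.inr ⟨r, h, rfl⟩
  · rintro (⟨r, h, rfl⟩ | ⟨r, h, rfl⟩)
    · exact ⟨r, Or.inl h, rfl⟩
    · exact ⟨r, Or.inr h, rfl⟩

lemma appSet_subset_heads {A : Type} (DB : Set A) (η : Set (NAIC A)) (W : Set (Act A)) :
    appSet DB η W ⊆ heads η := by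
  rintro α ⟨r, hr, he, _⟩
  exact ⟨r, hr, he⟩

lemma mem_applyUA {A : Type} (U : Set (Act A)) (DB : Set A) (a : A) :
    a ∈ applyUA U DB ↔ (a ∈ DB ∨ Act.add a ∈ U) ∧ Act.rem a ∉ U := Iff.rfl

lemma litOf_dual {A : Type} (α : Act A) : litOf α.dual = (litOf α).negate := by
  cases α <;> rfl

lemma satBody_congr {A : Type} (DB : Set A) (B : Set (Lit A)) (U V : Set (Act A))
    (h : ∀ a, (Lit.pos a ∈ B ∨ Lit.neg a ∈ B) →
      ((Act.add a ∈ U ↔ Act.add a ∈ V) ∧ (Act.rem a ∈ U ↔ Act.rem a ∈ V))) :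
    satBody (applyUA U DB) B ↔ satBody (applyUA V DB) B := by
  unfold satBody
  refine forall₂_congr ?_
  intro ℓ hℓ
  cases ℓ with
  | pos a =>
    obtain ⟨h1, h2⟩ := h a (Or.inl hℓ)
    show a ∈ applyUA U DB ↔ a ∈ applyUA V DB
    rw [mem_applyUA, mem_applyUA, h1, h2]
  | neg a =>
    obtain ⟨h1, h2⟩ := h a (Or.inr hℓ)
    show a ∉ applyUA U DB ↔ a ∉ applyUA V DB
    rw [mem_applyUA, mem_applyUA, h1, h2]

lemma sat_union_irrel {A : Type} {η₁ η₂ : Set (NAIC A)} (h : indepAIC η₁ η₂)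
    {r₁ : NAIC A} (hr₁ : r₁ ∈ η₁) {X : Set (Act A)} (hX : X ⊆ heads η₂)
    (U : Set (Act A)) (DB : Set A) :
    satBody (applyUA (U ∪ X) DB) r₁.body ↔ satBody (applyUA U DB) r₁.body := by
  apply satBody_congr
  intro a ha
  have key : ∀ β ∈ X, β ≠ Act.add a ∧ β ≠ Act.rem a := by
    intro β hβ
    obtain ⟨r₂, hr₂, hh⟩ := hX hβ
    have hnc := (h r₁ hr₁ r₂ hr₂).2
    rw [hh] at hnc
    constructor <;> rintro rfl
    · rcases ha with ha | ha
      · exact hnc.1 ha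
      · exact hnc.2 ha
    · rcases ha with ha | ha
      · exact hnc.2 ha
      · exact hnc.1 ha
  constructor
  · constructor
    · rintro (h' | h')
      · exact h'
      · exact absurd rfl (key _ h').1
    · exact Or.inl
  · constructor
    · rintro (h' | h')
      · exact h'
      · exact absurd rfl (key _ h').2
    · exact Or.inl

lemma indepAIC_symm {A : Type} {η₁ η₂ : Set (NAIC A)} (h : indepAIC η₁ η₂) :
    indepAIC η₂ η₁ :=
  fun r₂ h2 r₁ h1 => ⟨(h r₁ h1 r₂ h2).2, (h r₁ h1 r₂ h2).1⟩

lemma heads_disj {A : Type} {η₁ η₂ : Set (NAIC A)} (h : indepAIC η₁ η₂)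
    {α : Act A} (h1 : α ∈ heads η₁) (h2 : α ∈ heads η₂) : False := by
  obtain ⟨r₁, hr₁, he₁⟩ := h1
  obtain ⟨r₂, hr₂, he₂⟩ := h2
  have hnc := (h r₁ hr₁ r₂ hr₂).1
  apply hnc.2
  rw [he₁, ← he₂, ← litOf_dual]
  exact r₂.hcond

lemma cons_of_changes {A : Type} {DB : Set A} {U : Set (Act A)}
    (h : ∀ α ∈ U, changes DB α) {α : Act A} (h1 : α ∈ U) (h2 : α.dual ∈ U) : False := by
  have c1 := h α h1
  have c2 := h α.dual h2
  cases α
  · exact c1 c2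
  · exact c2 c1

lemma grounded_subset_heads {A : Type} {DB : Set A} {η : Set (NAIC A)} {U : Set (Act A)}
    (hg : strictlyGroundedT DB η U) : U ⊆ heads η := by
  intro α hα
  by_contra hn
  apply hg
  refine ⟨U ∩ heads η, ?_, ?_⟩
  · rw [Set.ssubset_def]
    exact ⟨Set.inter_subset_left, fun hs => hn (hs hα).2⟩
  · rintro β ⟨hβT, hβU⟩
    rcases (mem_uplus.mp hβT).1 with hb | hb
    · exact hb
    · exact ⟨hβU, appSet_subset_heads _ _ _ hb.1⟩

lemma forward {A : Type} {DB : Set A} {η₁ η₂ : Set (NAIC A)}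
    (h : indepAIC η₁ η₂) {U : Set (Act A)}
    (hg : groundedRepair DB (η₁ ∪ η₂) U) :
    groundedRepair DB η₁ (U ∩ heads η₁) := by
  have hsymm := indepAIC_symm h
  obtain ⟨⟨⟨hchg, hbody⟩, hmin⟩, hsg⟩ := hg
  have hsub : U ⊆ heads η₁ ∪ heads η₂ := by
    have := grounded_subset_heads hsg
    rwa [heads_union] at this
  have hUeq : U = (U ∩ heads η₁) ∪ (U ∩ heads η₂) := by
    rw [← Set.inter_union_distrib_left, Set.inter_eq_left.mpr hsub]
  set U₁ := U ∩ heads η₁ with hU₁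
  set U₂ := U ∩ heads η₂ with hU₂
  have hU₁h : U₁ ⊆ heads η₁ := Set.inter_subset_right
  have hU₂h : U₂ ⊆ heads η₂ := Set.inter_subset_right
  have hU₁U : U₁ ⊆ U := Set.inter_subset_left
  have hU₂U : U₂ ⊆ U := Set.inter_subset_left
  have hnd : ∀ α ∈ U₁, α ∉ U₂ := fun α h1 h2 => heads_disj h h1.2 h2.2
  have hbody₁ : ∀ r ∈ η₁, ¬ satBody (applyUA U₁ DB) r.body := by
    intro r hr hs
    apply hbody r (Set.mem_union_left _ hr)
    rw [hUeq]
    exact (sat_union_irrel h hr hU₂h U₁ DB).mpr hs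
  have hbody₂ : ∀ r ∈ η₂, ¬ satBody (applyUA U₂ DB) r.body := by
    intro r hr hs
    apply hbody r (Set.mem_union_right _ hr)
    rw [hUeq, Set.union_comm U₁ U₂]
    exact (sat_union_irrel hsymm hr hU₁h U₂ DB).mpr hs
  have hwr₁ : weakRepair DB η₁ U₁ := ⟨fun α hα => hchg α hα.1, hbody₁⟩
  have hmin₁ : ∀ V ⊆ U₁, weakRepair DB η₁ V → V = U₁ := by
    intro V hV hVwr
    have hVh : V ⊆ heads η₁ := hV.trans hU₁h
    have hVU : V ∪ U₂ ⊆ U := by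
      rw [hUeq]; exact Set.union_subset_union_left _ hV
    have hwr : weakRepair DB (η₁ ∪ η₂) (V ∪ U₂) := by
      constructor
      · rintro α (hα | hα)
        · exact hVwr.1 α hα
        · exact hchg α (hU₂U hα)
      · intro r hr hs
        rcases hr with hr | hr
        · exact hVwr.2 r hr ((sat_union_irrel h hr hU₂h V DB).mp hs)
        · apply hbody₂ r hr
          rw [Set.union_comm] at hs
          exact (sat_union_irrel hsymm hr hVh U₂ DB).mp hs
    have heq := hmin (V ∪ U₂) hVU hwr
    apply Set.Subset.antisymm hV
    intro α hα
    have hα' : α ∈ V ∪ U₂ := by rw [heq]; exact hU₁U hα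
    rcases hα' with h' | h'
    · exact h'
    · exact absurd h' (hnd α hα)
  have hsg₁ : strictlyGroundedT DB η₁ U₁ := by
    rintro ⟨V, hVss, hVT⟩
    have hV : V ⊆ U₁ := hVss.subset
    have hVh : V ⊆ heads η₁ := hV.trans hU₁h
    apply hsg
    refine ⟨V ∪ U₂, ?_, ?_⟩
    · rw [Set.ssubset_def]
      constructor
      · rw [hUeq]; exact Set.union_subset_union_left _ hV
      · intro hUs
        obtain ⟨α, hαU₁, hαV⟩ := Set.exists_of_ssubset hVss
        rcases hUs (hU₁U hαU₁) with h' | h'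
        · exact hαV h'
        · exact hnd α hαU₁ h'
    · rintro β ⟨hβT, hβU⟩
      obtain ⟨hin, hrem⟩ := mem_uplus.mp hβT
      by_cases hβV : β ∈ V ∪ U₂
      · exact hβV
      rcases hin with hin | hin
      · exact absurd hin hβV
      obtain ⟨happ, hdual⟩ := hin
      obtain ⟨r, hr, hhd, hsat⟩ := happ
      rcases hr with hr | hr
      · have hsat' : satBody (applyUA V DB) r.body :=
          (sat_union_irrel h hr hU₂h V DB).mp hsat
        have hβU₁ : β ∈ U₁ := ⟨hβU, r, hr, hhd⟩
        have hβV' : β ∉ V := fun hx => hβV (Or.inl hx)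
        have hmem : β ∈ T DB η₁ V := by
          rw [T_eq]
          apply mem_uplus.mpr
          constructor
          · refine Or.inr ⟨⟨r, hr, hhd, hsat'⟩, ?_⟩
            intro hd
            exact cons_of_changes hchg hβU (hU₁U (hV hd))
          · rintro ⟨hβV2, _⟩
            exact hβV' hβV2
        exact Or.inl (hVT ⟨hmem, hβU₁⟩)
      · exfalso
        apply hbody₂ r hr
        rw [Set.union_comm] at hsat
        exact (sat_union_irrel hsymm hr hVh U₂ DB).mp hsat
  exact ⟨⟨hwr₁, hmin₁⟩, hsg₁⟩

lemma sg_transfer {A : Type} {DB : Set A} {η₁ η₂ : Set (NAIC A)}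
    (h : indepAIC η₁ η₂) {U W : Set (Act A)}
    (hcons : ∀ α ∈ U, changes DB α)
    (hW : W ⊆ U) (hUsub : U ⊆ heads η₁ ∪ heads η₂)
    (hWT : T DB (η₁ ∪ η₂) W ∩ U ⊆ W)
    (hne : W ∩ heads η₁ ≠ U ∩ heads η₁) :
    ∃ V, V ⊂ U ∩ heads η₁ ∧ T DB η₁ V ∩ (U ∩ heads η₁) ⊆ V := by
  have hWeq : W = (W ∩ heads η₁) ∪ (W ∩ heads η₂) := by
    rw [← Set.inter_union_distrib_left, Set.inter_eq_left.mpr (hW.trans hUsub)]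
  refine ⟨W ∩ heads η₁, ?_, ?_⟩
  · exact Set.ssubset_iff_subset_ne.mpr ⟨Set.inter_subset_inter_left _ hW, hne⟩
  · rintro β ⟨hβT, hβU, hβh⟩
    by_cases hβW : β ∈ W
    · exact ⟨hβW, hβh⟩
    obtain ⟨hin, _⟩ := mem_uplus.mp hβT
    rcases hin with hin | hin
    · exact absurd hin.1 hβW
    obtain ⟨⟨r, hr, hhd, hsat⟩, hdual⟩ := hin
    have hsat' : satBody (applyUA W DB) r.body := by
      rw [hWeq]
      exact (sat_union_irrel h hr Set.inter_subset_right _ DB).mpr hsat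
    have hmem : β ∈ T DB (η₁ ∪ η₂) W := by
      rw [T_eq]
      apply mem_uplus.mpr
      constructor
      · refine Or.inr ⟨⟨r, Set.mem_union_left _ hr, hhd, hsat'⟩, ?_⟩
        intro hd
        exact cons_of_changes hcons hβU (hW hd)
      · rintro ⟨hβW2, _⟩
        exact hβW hβW2
    exact ⟨hWT ⟨hmem, hβU⟩, hβh⟩

lemma backward {A : Type} {DB : Set A} {η₁ η₂ : Set (NAIC A)}
    (h : indepAIC η₁ η₂) {U : Set (Act A)}
    (hUeq : U = (U ∩ heads η₁) ∪ (U ∩ heads η₂))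
    (g₁ : groundedRepair DB η₁ (U ∩ heads η₁))
    (g₂ : groundedRepair DB η₂ (U ∩ heads η₂)) :
    groundedRepair DB (η₁ ∪ η₂) U := by
  have hsymm := indepAIC_symm h
  set U₁ := U ∩ heads η₁ with hU₁
  set U₂ := U ∩ heads η₂ with hU₂
  obtain ⟨⟨⟨hchg₁, hbody₁⟩, hmin₁⟩, hsg₁⟩ := g₁
  obtain ⟨⟨⟨hchg₂, hbody₂⟩, hmin₂⟩, hsg₂⟩ := g₂
  have hU₁h : U₁ ⊆ heads η₁ := Set.inter_subset_right
  have hU₂h : U₂ ⊆ heads η₂ := Set.inter_subset_right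
  have hUsub : U ⊆ heads η₁ ∪ heads η₂ := by
    rw [hUeq]; exact Set.union_subset_union hU₁h hU₂h
  have hchg : ∀ α ∈ U, changes DB α := by
    intro α hα
    rw [hUeq] at hα
    rcases hα with hα | hα
    · exact hchg₁ α hα
    · exact hchg₂ α hα
  have hbody : ∀ r ∈ η₁ ∪ η₂, ¬ satBody (applyUA U DB) r.body := by
    rintro r (hr | hr) hs
    · apply hbody₁ r hr
      rw [hUeq] at hs
      exact (sat_union_irrel h hr hU₂h U₁ DB).mp hs
    · apply hbody₂ r hr
      rw [hUeq, Set.union_comm U₁ U₂] at hs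
      exact (sat_union_irrel hsymm hr hU₁h U₂ DB).mp hs
  refine ⟨⟨⟨hchg, hbody⟩, ?_⟩, ?_⟩
  · intro V hV hVwr
    have hVsub : V ⊆ heads η₁ ∪ heads η₂ := hV.trans hUsub
    have hVeq : V = (V ∩ heads η₁) ∪ (V ∩ heads η₂) := by
      rw [← Set.inter_union_distrib_left, Set.inter_eq_left.mpr hVsub]
    have hwr₁ : weakRepair DB η₁ (V ∩ heads η₁) := by
      refine ⟨fun α hα => hVwr.1 α hα.1, ?_⟩
      intro r hr hs
      apply hVwr.2 r (Set.mem_union_left _ hr)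
      rw [hVeq]
      exact (sat_union_irrel h hr Set.inter_subset_right _ DB).mpr hs
    have hwr₂ : weakRepair DB η₂ (V ∩ heads η₂) := by
      refine ⟨fun α hα => hVwr.1 α hα.1, ?_⟩
      intro r hr hs
      apply hVwr.2 r (Set.mem_union_right _ hr)
      rw [hVeq, Set.union_comm]
      exact (sat_union_irrel hsymm hr Set.inter_subset_right _ DB).mpr hs
    have e₁ := hmin₁ _ (Set.inter_subset_inter_left _ hV) hwr₁
    have e₂ := hmin₂ _ (Set.inter_subset_inter_left _ hV) hwr₂
    rw [hVeq, e₁, e₂, ← hUeq]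
  · rintro ⟨W, hWss, hWT⟩
    have hW := hWss.subset
    by_cases hne : W ∩ heads η₁ = U ∩ heads η₁
    · have hne₂ : W ∩ heads η₂ ≠ U ∩ heads η₂ := by
        intro hne₂
        have hWeq : W = (W ∩ heads η₁) ∪ (W ∩ heads η₂) := by
          rw [← Set.inter_union_distrib_left, Set.inter_eq_left.mpr (hW.trans hUsub)]
        have : W = U := by rw [hWeq, hne, hne₂, ← hU₁, ← hU₂, ← hUeq]
        exact (Set.ssubset_iff_subset_ne.mp hWss).2 this
      have hWT' : T DB (η₂ ∪ η₁) W ∩ U ⊆ W := by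
        rw [Set.union_comm η₂ η₁]; exact hWT
      obtain ⟨V, hVss, hVT⟩ :=
        sg_transfer hsymm hchg hW (by rw [Set.union_comm (heads η₂)]; exact hUsub) hWT' hne₂
      exact hsg₂ ⟨V, hVss, hVT⟩
    · obtain ⟨V, hVss, hVT⟩ := sg_transfer h hchg hW hUsub hWT hne
      exact hsg₁ ⟨V, hVss, hVT⟩

/-- If `η₁ ⊥ η₂`, then `U` is a grounded repair for `(DB, η₁ ∪ η₂)` iff `U = U₁ ∪ U₂`
where `Uᵢ = U ∩ {head(r) | r ∈ ηᵢ}` and each `Uᵢ` is a grounded repair for `(DB, ηᵢ)`. -/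
theorem indep_groundedRepair {A : Type} (DB : Set A) (η₁ η₂ : Set (NAIC A))
    (hdisj : Disjoint η₁ η₂) (h : indepAIC η₁ η₂) (U : Set (Act A)) :
    groundedRepair DB (η₁ ∪ η₂) U ↔
      (U = (U ∩ {α | ∃ r ∈ η₁, r.head = α}) ∪ (U ∩ {α | ∃ r ∈ η₂, r.head = α}) ∧
        groundedRepair DB η₁ (U ∩ {α | ∃ r ∈ η₁, r.head = α}) ∧
        groundedRepair DB η₂ (U ∩ {α | ∃ r ∈ η₂, r.head = α})) := by
  have e₁ : {α : Act A | ∃ r ∈ η₁, r.head = α} = heads η₁ := rfl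
  have e₂ : {α : Act A | ∃ r ∈ η₂, r.head = α} = heads η₂ := rfl
  rw [e₁, e₂]
  constructor
  · intro hg
    have hsub : U ⊆ heads η₁ ∪ heads η₂ := by
      have := grounded_subset_heads hg.2
      rwa [heads_union] at this
    have hUeq : U = U ∩ heads η₁ ∪ U ∩ heads η₂ := by
      rw [← Set.inter_union_distrib_left, Set.inter_eq_left.mpr hsub]
    refine ⟨hUeq, forward h hg, ?_⟩
    have hg' : groundedRepair DB (η₂ ∪ η₁) U := by
      rwa [Set.union_comm η₂ η₁]
    exact forward (indepAIC_symm h) hg'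
  · rintro ⟨hUeq, g₁, g₂⟩
    exact backward h hUeq g₁ g₂
end

section
/- If O₁ and O₂ are independent operators on a complete distributive complemented lattice L, then O₁ and O₂ commute; moreover, for O = O₁ ∘ O₂, an element x ∈ L is strictly grounded for O if and only if x = (x ⊓ v₁) ⊔ (x ⊓ v₂) and x ⊓ vᵢ is strictly grounded for Oᵢ for i = 1, 2. -/
/-- `O` is a `(u,v)`-operator: `u ≤ v` and `O(x) = (O(x ⊓ v) ⊓ u) ⊔ (x ⊓ uᶜ)` for all `x`. -/
def isUVOp {L : Type*} [CompleteBooleanAlgebra L] (O : L → L) (u v : L) : Prop :=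
  u ≤ v ∧ ∀ x : L, O x = (O (x ⊓ v) ⊓ u) ⊔ (x ⊓ uᶜ)

section Aux

variable {L : Type*} [CompleteBooleanAlgebra L]

/-- The key structural formula for the composition of two independent operators. -/
lemma indep_key_formula (O₁ O₂ : L → L) (u₁ v₁ u₂ v₂ : L)
    (h₁ : isUVOp O₁ u₁ v₁) (h₂ : isUVOp O₂ u₂ v₂)
    (h₁₂ : u₁ ⊓ v₂ = ⊥) (h₂₁ : u₂ ⊓ v₁ = ⊥) (x : L) :
    O₁ (O₂ x) = (O₁ (x ⊓ v₁) ⊓ u₁) ⊔ ((O₂ (x ⊓ v₂) ⊓ u₂) ⊔ (x ⊓ (u₁ᶜ ⊓ u₂ᶜ))) := by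
  have hv₁u₂c : v₁ ≤ u₂ᶜ := le_compl_iff_disjoint_left.mpr (disjoint_iff.mpr h₂₁)
  have hu₂u₁c : u₂ ≤ u₁ᶜ := by
    have : u₁ ⊓ u₂ = ⊥ := le_bot_iff.mp ((inf_le_inf_left u₁ h₂.1).trans h₁₂.le)
    exact le_compl_iff_disjoint_left.mpr (disjoint_iff.mpr this)
  have hOv : O₂ x ⊓ v₁ = x ⊓ v₁ := by
    rw [h₂.2 x, inf_sup_right]
    have a : O₂ (x ⊓ v₂) ⊓ u₂ ⊓ v₁ = ⊥ := by rw [inf_assoc, h₂₁, inf_bot_eq]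
    have b : x ⊓ u₂ᶜ ⊓ v₁ = x ⊓ v₁ := by
      rw [inf_assoc, inf_eq_right.mpr hv₁u₂c]
    rw [a, b, bot_sup_eq]
  rw [h₁.2 (O₂ x), hOv, h₂.2 x, inf_sup_right]
  congr 1
  congr 1
  · rw [inf_assoc, inf_eq_left.mpr hu₂u₁c]
  · rw [inf_assoc, inf_comm u₂ᶜ u₁ᶜ]

/-- If `x` is strictly grounded for `O₁ ∘ O₂`, then `x ⊓ v₁` is strictly grounded for `O₁`. -/
lemma indep_grounded_left (O₁ O₂ : L → L) (u₁ v₁ u₂ v₂ : L)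
    (h₁ : isUVOp O₁ u₁ v₁) (h₂ : isUVOp O₂ u₂ v₂)
    (h₁₂ : u₁ ⊓ v₂ = ⊥) (h₂₁ : u₂ ⊓ v₁ = ⊥) {x : L}
    (hg : strictlyGrounded (O₁ ∘ O₂) x) : strictlyGrounded O₁ (x ⊓ v₁) := by
  have hu₂v₁c : u₂ ≤ v₁ᶜ := le_compl_iff_disjoint_left.mpr (disjoint_iff.mpr (by rw [inf_comm]; exact h₂₁))
  rintro ⟨y, hy, hle⟩
  have hyv : y ≤ v₁ := hy.le.trans inf_le_right
  have hyx : y ≤ x := hy.le.trans inf_le_left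
  set z := y ⊔ x ⊓ v₁ᶜ with hz
  have hzv : z ⊓ v₁ = y := by
    rw [hz, inf_sup_right, inf_assoc, compl_inf_self, inf_bot_eq, sup_bot_eq,
      inf_eq_left.mpr hyv]
  have hzx : z ≤ x := sup_le hyx inf_le_left
  have hzne : z ≠ x := by
    intro h
    exact hy.ne' (by rw [← h, hzv])
  apply hg
  refine ⟨z, lt_of_le_of_ne hzx hzne, ?_⟩
  show O₁ (O₂ z) ⊓ x ≤ z
  rw [indep_key_formula O₁ O₂ u₁ v₁ u₂ v₂ h₁ h₂ h₁₂ h₂₁ z, hzv, inf_sup_right, inf_sup_right]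
  refine sup_le ?_ (sup_le ?_ ?_)
  · have hyv' : y ⊓ v₁ = y := inf_eq_left.mpr hyv
    calc O₁ y ⊓ u₁ ⊓ x ≤ O₁ y ⊓ (x ⊓ v₁) := by
          refine le_inf (inf_le_of_left_le inf_le_left) (le_inf inf_le_right ?_)
          exact inf_le_of_left_le (inf_le_of_right_le h₁.1)
      _ ≤ y := hle
      _ ≤ z := le_sup_left
  · calc O₂ (z ⊓ v₂) ⊓ u₂ ⊓ x ≤ x ⊓ v₁ᶜ :=
          le_inf inf_le_right (inf_le_of_left_le (inf_le_of_right_le hu₂v₁c))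
      _ ≤ z := le_sup_right
  · exact inf_le_of_left_le inf_le_left

/-- Claim A: if `O₁(O₂ y) ⊓ x ≤ y` then `O₁(y ⊓ v₁) ⊓ (x ⊓ v₁) ≤ y ⊓ v₁`. -/
lemma indep_claimA (O₁ O₂ : L → L) (u₁ v₁ u₂ v₂ : L)
    (h₁ : isUVOp O₁ u₁ v₁) (h₂ : isUVOp O₂ u₂ v₂)
    (h₁₂ : u₁ ⊓ v₂ = ⊥) (h₂₁ : u₂ ⊓ v₁ = ⊥) (y x : L)
    (hle : O₁ (O₂ y) ⊓ x ≤ y) : O₁ (y ⊓ v₁) ⊓ (x ⊓ v₁) ≤ y ⊓ v₁ := by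
  have hu₂u₁ : u₂ ⊓ u₁ = ⊥ := by
    have : u₁ ⊓ u₂ = ⊥ := le_bot_iff.mp ((inf_le_inf_left u₁ h₂.1).trans h₁₂.le)
    rw [inf_comm]; exact this
  have step : O₁ (O₂ y) ⊓ u₁ = O₁ (y ⊓ v₁) ⊓ u₁ := by
    rw [indep_key_formula O₁ O₂ u₁ v₁ u₂ v₂ h₁ h₂ h₁₂ h₂₁ y, inf_sup_right, inf_sup_right]
    have a : O₁ (y ⊓ v₁) ⊓ u₁ ⊓ u₁ = O₁ (y ⊓ v₁) ⊓ u₁ := by rw [inf_assoc, inf_idem]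
    have b : O₂ (y ⊓ v₂) ⊓ u₂ ⊓ u₁ = ⊥ := by rw [inf_assoc, hu₂u₁, inf_bot_eq]
    have c : y ⊓ (u₁ᶜ ⊓ u₂ᶜ) ⊓ u₁ = ⊥ := by
      rw [inf_assoc, inf_comm (u₁ᶜ ⊓ u₂ᶜ) u₁, ← inf_assoc u₁ u₁ᶜ u₂ᶜ, inf_compl_self,
        bot_inf_eq, inf_bot_eq]
    rw [a, b, c, bot_sup_eq, sup_bot_eq]
  have expand : O₁ (y ⊓ v₁) = (O₁ (y ⊓ v₁) ⊓ u₁) ⊔ (y ⊓ v₁ ⊓ u₁ᶜ) := by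
    conv_lhs => rw [h₁.2 (y ⊓ v₁)]
    rw [inf_assoc, inf_idem]
  rw [expand, inf_sup_right]
  refine sup_le ?_ (inf_le_of_left_le inf_le_left)
  rw [← step]
  calc O₁ (O₂ y) ⊓ u₁ ⊓ (x ⊓ v₁) ≤ (O₁ (O₂ y) ⊓ x) ⊓ v₁ := by
        refine le_inf (le_inf (inf_le_of_left_le inf_le_left)
          (inf_le_of_right_le inf_le_left)) (inf_le_of_right_le inf_le_right)
    _ ≤ y ⊓ v₁ := inf_le_inf_right v₁ hle

end Aux

/-- If `O₁` and `O₂` are independent operators on a complete distributive complemented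
lattice, then they commute, and `x` is strictly grounded for `O = O₁ ∘ O₂` iff
`x = (x ⊓ v₁) ⊔ (x ⊓ v₂)` and each `x ⊓ vᵢ` is strictly grounded for `Oᵢ`. -/
theorem indep_operators_commute_and_grounded {L : Type*} [CompleteBooleanAlgebra L]
    (O₁ O₂ : L → L) (u₁ v₁ u₂ v₂ : L)
    (h₁ : isUVOp O₁ u₁ v₁) (h₂ : isUVOp O₂ u₂ v₂)
    (h₁₂ : u₁ ⊓ v₂ = ⊥) (h₂₁ : u₂ ⊓ v₁ = ⊥) :
    (∀ x, O₁ (O₂ x) = O₂ (O₁ x)) ∧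
    (∀ x, strictlyGrounded (O₁ ∘ O₂) x ↔
      (x = (x ⊓ v₁) ⊔ (x ⊓ v₂) ∧
        strictlyGrounded O₁ (x ⊓ v₁) ∧ strictlyGrounded O₂ (x ⊓ v₂))) := by
  have comm : ∀ x, O₁ (O₂ x) = O₂ (O₁ x) := by
    intro x
    rw [indep_key_formula O₁ O₂ u₁ v₁ u₂ v₂ h₁ h₂ h₁₂ h₂₁ x,
      indep_key_formula O₂ O₁ u₂ v₂ u₁ v₁ h₂ h₁ h₂₁ h₁₂ x,
      inf_comm u₂ᶜ u₁ᶜ, sup_left_comm]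
  refine ⟨comm, fun x => ?_⟩
  have hcompeq : O₂ ∘ O₁ = O₁ ∘ O₂ := funext fun y => (comm y).symm
  constructor
  · intro hg
    have hx : x = (x ⊓ v₁) ⊔ (x ⊓ v₂) := by
      by_contra hne
      rw [← inf_sup_left] at hne
      apply hg
      refine ⟨x ⊓ (v₁ ⊔ v₂), lt_of_le_of_ne inf_le_left (fun h => hne h.symm), ?_⟩
      show O₁ (O₂ (x ⊓ (v₁ ⊔ v₂))) ⊓ x ≤ x ⊓ (v₁ ⊔ v₂)
      rw [indep_key_formula O₁ O₂ u₁ v₁ u₂ v₂ h₁ h₂ h₁₂ h₂₁, inf_sup_right, inf_sup_right]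
      refine sup_le ?_ (sup_le ?_ ?_)
      · refine le_inf inf_le_right ?_
        exact inf_le_of_left_le (inf_le_of_right_le (h₁.1.trans le_sup_left))
      · refine le_inf inf_le_right ?_
        exact inf_le_of_left_le (inf_le_of_right_le (h₂.1.trans le_sup_right))
      · exact inf_le_of_left_le inf_le_left
    have hg' : strictlyGrounded (O₂ ∘ O₁) x := by rwa [hcompeq]
    exact ⟨hx, indep_grounded_left O₁ O₂ u₁ v₁ u₂ v₂ h₁ h₂ h₁₂ h₂₁ hg,
      indep_grounded_left O₂ O₁ u₂ v₂ u₁ v₁ h₂ h₁ h₂₁ h₁₂ hg'⟩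
  · rintro ⟨hx, g₁, g₂⟩ ⟨y, hy, hle⟩
    have hle₁ : O₁ (O₂ y) ⊓ x ≤ y := hle
    have hle₂ : O₂ (O₁ y) ⊓ x ≤ y := by rw [← comm y]; exact hle
    have hA₁ := indep_claimA O₁ O₂ u₁ v₁ u₂ v₂ h₁ h₂ h₁₂ h₂₁ y x hle₁
    have hA₂ := indep_claimA O₂ O₁ u₂ v₂ u₁ v₁ h₂ h₁ h₂₁ h₁₂ y x hle₂
    have h1 : y ⊓ v₁ = x ⊓ v₁ := by
      by_contra hne
      exact g₁ ⟨y ⊓ v₁, lt_of_le_of_ne (inf_le_inf_right v₁ hy.le) hne, hA₁⟩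
    have h2 : y ⊓ v₂ = x ⊓ v₂ := by
      by_contra hne
      exact g₂ ⟨y ⊓ v₂, lt_of_le_of_ne (inf_le_inf_right v₂ hy.le) hne, hA₂⟩
    have : x ≤ y := by
      rw [hx, ← h1, ← h2]
      exact sup_le inf_le_left inf_le_left
    exact hy.not_ge this
end

section
/- For every set of update actions U, T_{N(η)}(U) ⊆ ⋃ T_η(U), where N(η) is the normalization of η. -/
/-- A general (possibly non-normalized) active integrity constraint. -/
structure GAIC (A : Type) where
  body : Set (Lit A)
  head : Set (Act A)
  hne : head.Nonempty
  hcond : ∀ α ∈ head, litOf α.dual ∈ body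

/-- The non-deterministic operator `T_η`: `U ⊎ V ∈ T_η(U)` iff `V` is obtained by
picking exactly one action from the head of each rule `r ∈ η` with `U(DB) ⊨ body(r)`. -/
def Tnd {A : Type} (DB : Set A) (η : Set (GAIC A)) (U : Set (Act A)) :
    Set (Set (Act A)) :=
  {W | ∃ f : GAIC A → Act A,
        (∀ r ∈ η, satBody (applyUA U DB) r.body → f r ∈ r.head) ∧
        W = uplus U {α | ∃ r ∈ η, satBody (applyUA U DB) r.body ∧ f r = α}}

/-- The deterministic operator `T_{N(η)}` of the normalization `N(η)` of `η`:
`T_{N(η)}(U) = U ⊎ {α | α ∈ head(r), U(DB) ⊨ body(r), r ∈ η}`. -/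
def TN {A : Type} (DB : Set A) (η : Set (GAIC A)) (U : Set (Act A)) : Set (Act A) :=
  uplus U {α | ∃ r ∈ η, satBody (applyUA U DB) r.body ∧ α ∈ r.head}

/-- For every set of update actions `U`, `T_{N(η)}(U) ⊆ ⋃ T_η(U)`. -/
theorem TN_subset_sUnion_Tnd {A : Type} (DB : Set A) (η : Set (GAIC A))
    (U : Set (Act A)) :
    TN DB η U ⊆ ⋃₀ Tnd DB η U := by
  classical
  intro α hα
  obtain ⟨hin, hnot⟩ := hα
  set S : Set (Act A) := {α | ∃ r ∈ η, satBody (applyUA U DB) r.body ∧ α ∈ r.head}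
  set f : GAIC A → Act A := fun r => if α ∈ r.head then α else r.hne.some
  have hf : ∀ r : GAIC A, f r ∈ r.head := by
    intro r; simp only [f]; split
    · assumption
    · exact r.hne.some_mem
  set V : Set (Act A) := {β | ∃ r ∈ η, satBody (applyUA U DB) r.body ∧ f r = β}
  have hVS : V ⊆ S := by
    rintro β ⟨r, hr, hb, rfl⟩
    exact ⟨r, hr, hb, hf r⟩
  refine ⟨uplus U V, ⟨f, fun r _ _ => hf r, rfl⟩, ?_, ?_⟩
  · rcases hin with hU | ⟨hS, hd⟩
    · exact Or.inl hU
    · refine Or.inr ⟨?_, hd⟩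
      obtain ⟨r, hr, hb, hh⟩ := hS
      refine ⟨r, hr, hb, ?_⟩
      simp only [f, if_pos hh]
  · rintro ⟨h1, h2⟩
    exact hnot ⟨h1, hVS h2⟩
end

section
/- A set U is strictly grounded for the non-deterministic operator T_η if and only if U is strictly grounded for the deterministic operator T_{N(η)}. -/
open Classical in
lemma sUnion_Tnd_eq_TN_outside {A : Type} (DB : Set A) (η : Set (GAIC A))
    (V : Set (Act A)) (α : Act A) (hα : α ∉ V) :
    α ∈ ⋃₀ Tnd DB η V ↔ α ∈ TN DB η V := by
  constructor
  · rintro ⟨W, ⟨f, hf, rfl⟩, hαW⟩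
    rcases hαW with ⟨h1, _⟩
    rcases h1 with hV | ⟨⟨r, hr, hsat, hfr⟩, hd⟩
    · exact absurd hV hα
    · refine ⟨Or.inr ⟨⟨r, hr, hsat, hfr ▸ hf r hr hsat⟩, hd⟩, ?_⟩
      rintro ⟨hV, _⟩; exact hα hV
  · rintro ⟨h1, _⟩
    rcases h1 with hV | ⟨⟨r, hr, hsat, hhd⟩, hd⟩
    · exact absurd hV hα
    · refine ⟨_, ⟨fun r' => if r' = r then α else r'.hne.some, fun r' _ _ => ?_, rfl⟩, ?_⟩
      · by_cases h : r' = r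
        · simp [h, hhd]
        · simp [h, r'.hne.some_mem]
      · refine ⟨Or.inr ⟨⟨r, hr, hsat, by simp⟩, hd⟩, ?_⟩
        rintro ⟨hV, _⟩; exact hα hV

/-- `U` is strictly grounded for the non-deterministic operator `T_η` iff it is strictly
grounded for the deterministic operator `T_{N(η)}`. -/
theorem strictlyGrounded_Tnd_iff_TN {A : Type} (DB : Set A) (η : Set (GAIC A))
    (U : Set (Act A)) :
    (¬ ∃ V : Set (Act A), V ⊂ U ∧ (⋃₀ Tnd DB η V) ∩ U ⊆ V) ↔
    (¬ ∃ V : Set (Act A), V ⊂ U ∧ TN DB η V ∩ U ⊆ V) := by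
  have key : ∀ V : Set (Act A), ((⋃₀ Tnd DB η V) ∩ U ⊆ V) ↔ (TN DB η V ∩ U ⊆ V) := by
    intro V
    constructor <;> intro h α ⟨hm, hU⟩ <;> by_cases hα : α ∈ V
    · exact hα
    · exact h ⟨(sUnion_Tnd_eq_TN_outside DB η V α hα).2 hm, hU⟩
    · exact hα
    · exact h ⟨(sUnion_Tnd_eq_TN_outside DB η V α hα).1 hm, hU⟩
  constructor
  · intro h ⟨V, hVU, hs⟩; exact h ⟨V, hVU, (key V).mpr hs⟩
  · intro h ⟨V, hVU, hs⟩; exact h ⟨V, hVU, (key V).mp hs⟩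
end
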